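/- Let U be a nonempty finite set of seeds, K a natural number, and p : U → ℝ with 0 ≤ p v ≤ 1 for all v ∈ U. Define the stage-wise expected coverage objective of a schedule u : Fin K → U as ∑_{i : Fin K} p (u i) · ∏_{j < i} (1 - p (u j)), i.e., the sum over stages of the probability that the branch was not flipped before stage i times the probability that the seed chosen at stage i flips it. Then this objective is maximized over all schedules by the constant schedule that always selects a seed attaining M = max_{v ∈ U} p v, and its optimal value equals 1 - (1 - M)^K. -/
import Mathlib

lemma telescope (K : ℕ) (q : ℕ → ℝ) :
    ∑ i ∈ Finset.range K, q i * ∏ j ∈ Finset.range i, (1 - q j)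
      = 1 - ∏ i ∈ Finset.range K, (1 - q i) := by
  induction K with
  | zero => simp
  | succ n ih => rw [Finset.sum_range_succ, Finset.prod_range_succ, ih]; ring

lemma prod_filter_lt (K : ℕ) (g : Fin K → ℝ) (i : Fin K) :
    ∏ j ∈ Finset.univ.filter (fun j : Fin K => j < i), g j
      = ∏ n ∈ Finset.range i.val, (fun n => if h : n < K then g ⟨n, h⟩ else 1) n := by
  refine Finset.prod_bij (fun j _ => j.val) ?_ ?_ ?_ ?_
  · intro j hj
    simp only [Finset.mem_filter, Fin.lt_def] at hj
    exact Finset.mem_range.mpr hj.2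
  · intro a _ b _ h; exact Fin.val_injective h
  · intro n hn
    rw [Finset.mem_range] at hn
    exact ⟨⟨n, hn.trans i.isLt⟩, by
      simp only [Finset.mem_filter, Fin.lt_def]; exact ⟨Finset.mem_univ _, hn⟩, rfl⟩
  · intro j _; simp [j.isLt]

lemma objective_eq (K : ℕ) (f : Fin K → ℝ) :
    ∑ i : Fin K, f i * ∏ j ∈ Finset.univ.filter (fun j : Fin K => j < i), (1 - f j)
      = 1 - ∏ i : Fin K, (1 - f i) := by
  set q : ℕ → ℝ := fun n => if h : n < K then f ⟨n, h⟩ else 0 with hq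
  have hterm : ∀ i : Fin K,
      f i * ∏ j ∈ Finset.univ.filter (fun j : Fin K => j < i), (1 - f j)
        = q i.val * ∏ n ∈ Finset.range i.val, (1 - q n) := by
    intro i
    rw [prod_filter_lt K (fun j => 1 - f j) i]
    congr 1
    · simp [hq, i.isLt]
    · apply Finset.prod_congr rfl
      intro n hn
      rw [Finset.mem_range] at hn
      simp [hq, hn.trans i.isLt]
  calc ∑ i : Fin K, f i * ∏ j ∈ Finset.univ.filter (fun j : Fin K => j < i), (1 - f j)
      = ∑ i : Fin K, (fun n => q n * ∏ m ∈ Finset.range n, (1 - q m)) i.val := by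
        exact Finset.sum_congr rfl fun i _ => hterm i
    _ = ∑ n ∈ Finset.range K, q n * ∏ m ∈ Finset.range n, (1 - q m) :=
        Fin.sum_univ_eq_sum_range (fun n => q n * ∏ m ∈ Finset.range n, (1 - q m)) K
    _ = 1 - ∏ n ∈ Finset.range K, (1 - q n) := telescope K q
    _ = 1 - ∏ i : Fin K, (1 - f i) := by
        congr 1
        rw [← Fin.prod_univ_eq_prod_range (fun n => 1 - q n) K]
        exact Finset.prod_congr rfl fun i _ => by simp [hq, i.isLt]
/-- The stage-wise expected coverage objective
`∑ i, p (u i) * ∏_{j < i} (1 - p (u j))` of a single-branch schedule is maximized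
by the constant schedule using a seed attaining `M = max_v p v`, and its optimal
value equals `1 - (1 - M)^K`. -/
theorem greedy_constant_schedule_maximizes_stagewise_objective
    {U : Type*} [Fintype U] [Nonempty U] (K : ℕ) (p : U → ℝ)
    (hp : ∀ v : U, 0 ≤ p v ∧ p v ≤ 1) :
    ∃ v : U, p v = Finset.univ.sup' Finset.univ_nonempty p ∧
      (∀ u : Fin K → U,
        (∑ i : Fin K, p (u i) *
            ∏ j ∈ Finset.univ.filter (fun j : Fin K => j < i), (1 - p (u j))) ≤
        ∑ i : Fin K, p v *
            ∏ j ∈ Finset.univ.filter (fun j : Fin K => j < i), (1 - p v)) ∧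
      (∑ i : Fin K, p v *
          ∏ j ∈ Finset.univ.filter (fun j : Fin K => j < i), (1 - p v)) =
        1 - (1 - Finset.univ.sup' Finset.univ_nonempty p) ^ K := by
  obtain ⟨v, -, hv⟩ := Finset.exists_mem_eq_sup' Finset.univ_nonempty p
  set M := Finset.univ.sup' Finset.univ_nonempty p with hM
  have hconst :
      (∑ i : Fin K, p v *
          ∏ j ∈ Finset.univ.filter (fun j : Fin K => j < i), (1 - p v)) =
        1 - (1 - M) ^ K := by
    rw [objective_eq K (fun _ => p v)]
    simp [← hv, Finset.prod_const, Fintype.card_fin]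
  refine ⟨v, hv.symm, fun u => ?_, hconst⟩
  rw [hconst, objective_eq K (fun i => p (u i))]
  have h1 : (1 - M) ^ K ≤ ∏ i : Fin K, (1 - p (u i)) := by
    calc (1 - M) ^ K = ∏ _i : Fin K, (1 - M) := by
          simp [Finset.prod_const, Fintype.card_fin]
      _ ≤ ∏ i : Fin K, (1 - p (u i)) := by
          apply Finset.prod_le_prod
          · intro i _
            have := (hp v).2
            rw [← hv] at this
            linarith
          · intro i _
            have : p (u i) ≤ M := Finset.le_sup' p (Finset.mem_univ _)
            linarith
  linarith
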